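/- Let ε > 0, ρ_ε a finite-horizon kernel, and E ⊆ ℝ^d a set of finite 𝔓_ε-perimeter. Then there exists a unique (up to reindexing) at most countable collection {E^{x_i}}_{i∈I} of ε-connected components of E such that each E^{x_i} is ε-indecomposable, |E^{x_i}| > 0, the sets E^{x_i} are pairwise disjoint with ⋃_{i∈I} E^{x_i} = E^(1), and 𝔓_ε(E) = Σ_{i∈I} 𝔓_ε(E^{x_i}). -/

import Mathlib

open MeasureTheory Metric Set Filter
open scoped ENNReal Topology

noncomputable section

/-- The Gagliardo perimeter of a set `A` with respect to a kernel `ρ`. -/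
def gagPer {d : ℕ} (ρ : EuclideanSpace ℝ (Fin d) → ℝ≥0∞)
    (A : Set (EuclideanSpace ℝ (Fin d))) : ℝ≥0∞ :=
  2 * ∫⁻ x in A, ∫⁻ y in Aᶜ, ρ (x - y) / edist x y

/-- The support of the Lebesgue measure restricted to `A`. -/
def measSupp {d : ℕ} (A : Set (EuclideanSpace ℝ (Fin d))) : Set (EuclideanSpace ℝ (Fin d)) :=
  {x | ∀ r : ℝ, 0 < r → 0 < volume (A ∩ ball x r)}

/-- A finite-horizon kernel with horizon `ε`. -/
def IsFiniteHorizonKernel {d : ℕ} (ε : ℝ) (ρ : EuclideanSpace ℝ (Fin d) → ℝ≥0∞) : Prop :=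
  Measurable ρ ∧
    measSupp (Function.support ρ) = closedBall (0 : EuclideanSpace ℝ (Fin d)) ε

/-- `ε`-decomposability of a set with respect to the Gagliardo perimeter associated to `ρ`. -/
def epsDecomposable {d : ℕ} (ρ : EuclideanSpace ℝ (Fin d) → ℝ≥0∞)
    (A : Set (EuclideanSpace ℝ (Fin d))) : Prop :=
  ∃ E₁ E₂ : Set (EuclideanSpace ℝ (Fin d)), MeasurableSet E₁ ∧ MeasurableSet E₂ ∧
    E₁ ∪ E₂ = A ∧ Disjoint E₁ E₂ ∧ 0 < volume E₁ ∧ 0 < volume E₂ ∧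
    gagPer ρ E₁ < ⊤ ∧ gagPer ρ E₂ < ⊤ ∧ gagPer ρ A = gagPer ρ E₁ + gagPer ρ E₂

/-- The set of points of Lebesgue density one of `A`. -/
def densityOne {d : ℕ} (A : Set (EuclideanSpace ℝ (Fin d))) : Set (EuclideanSpace ℝ (Fin d)) :=
  {x | Tendsto (fun r : ℝ => volume (A ∩ ball x r) / volume (ball x r)) (𝓝[>] 0) (𝓝 1)}

/-- Two points of `densityOne A` are `ε`-connected in `A` if they can be joined by a finite
chain of points of `densityOne A` with consecutive distances `< ε`. -/
def epsConnected {d : ℕ} (ε : ℝ) (A : Set (EuclideanSpace ℝ (Fin d)))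
    (x y : EuclideanSpace ℝ (Fin d)) : Prop :=
  ∃ N : ℕ, ∃ z : ℕ → EuclideanSpace ℝ (Fin d), z 0 = x ∧ z N = y ∧
    (∀ i ≤ N, z i ∈ densityOne A) ∧ ∀ i < N, dist (z i) (z (i + 1)) < ε

/-- The `ε`-connected component of `A` containing `x`. -/
def epsComponent {d : ℕ} (ε : ℝ) (A : Set (EuclideanSpace ℝ (Fin d)))
    (x : EuclideanSpace ℝ (Fin d)) : Set (EuclideanSpace ℝ (Fin d)) :=
  {y ∈ densityOne A | epsConnected ε A x y}

/-- The (extended) distance between two sets. -/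
def setEDist {d : ℕ} (S T : Set (EuclideanSpace ℝ (Fin d))) : ℝ≥0∞ :=
  ⨅ x ∈ S, ⨅ y ∈ T, edist x y

/-!
The `ε`-connected components are the classes of an equivalence relation on `E^(1)`. Each one is
`E^(1)` cut by an open set (its own `ε`-thickening), hence null-measurable, and it contains
`E^(1) ∩ B_ε(x)`, hence has positive measure; so there are countably many. Distinct components lie
at distance `≥ ε`, beyond the horizon of `ρ`, so a point of a component `F` interacts with `Fᶜ`
only through `(E^(1))ᶜ`; as `E` and `E^(1)` differ by a null set (Lebesgue's density theorem),
the perimeter of `E` is the sum of the perimeters of the components. If a component splits as `E₁ ⊔ E₂` with additive perimeters, the cross interaction of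
`E₁` and `E₂` vanishes; but an `ε`-chain inside the component yields points of the measure
supports of `E₁` and `E₂` closer than `ε`, and near such points the interaction is positive.
Uniqueness: an admissible family consists of components and covers `E^(1)`.
-/

theorem exists_dist_lt_of_chain {X : Type*} [PseudoMetricSpace X] {U V : Set X} {ε : ℝ}
    (hε : 0 < ε) {N : ℕ} {z : ℕ → X} (h0 : z 0 ∈ U) (hN : z N ∈ V)
    (hUV : ∀ i ≤ N, z i ∈ U ∪ V) (hz : ∀ i < N, dist (z i) (z (i + 1)) < ε) :
    ∃ p ∈ U, ∃ q ∈ V, dist p q < ε := by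
  induction N generalizing z with
  | zero => exact ⟨z 0, h0, z 0, hN, by rwa [dist_self]⟩
  | succ N ih =>
    rcases hUV 1 (by omega) with h1 | h1
    · exact ih (z := fun i => z (i + 1)) h1 hN (fun i hi => hUV (i + 1) (by omega))
        (fun i hi => hz (i + 1) (by omega))
    · exact ⟨z 0, h0, z 1, h1, hz 0 (by omega)⟩

theorem Set.PairwiseDisjoint.countable_of_measure_pos {α : Type*} [MeasurableSpace α]
    {μ : Measure α} [SFinite μ] {𝒮 : Set (Set α)} (hd : 𝒮.PairwiseDisjoint id)
    (hm : ∀ s ∈ 𝒮, NullMeasurableSet s μ) (hpos : ∀ s ∈ 𝒮, 0 < μ s) : 𝒮.Countable := by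
  have h := Measure.countable_meas_pos_of_disjoint_iUnion₀ (μ := μ)
    (As := fun s : 𝒮 => (s : Set α)) (fun s => hm s s.2)
    (fun s t hst => (hd s.2 t.2 (Subtype.coe_ne_coe.2 hst)).aedisjoint)
  rw [eq_univ_of_forall (s := {s : 𝒮 | 0 < μ s}) fun s => hpos s s.2] at h
  exact countable_coe_iff.1 (countable_univ_iff.1 h)

theorem ball_ae_eq_closedBall {E : Type*} [NormedAddCommGroup E] [NormedSpace ℝ E]
    [MeasurableSpace E] [BorelSpace E] [FiniteDimensional ℝ E] (μ : Measure E)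
    [μ.IsAddHaarMeasure] (x : E) {r : ℝ} (hr : r ≠ 0) : ball x r =ᵐ[μ] closedBall x r := by
  rw [← ball_union_sphere]
  exact (union_ae_eq_left_of_ae_eq_empty
    (ae_eq_empty.2 (Measure.addHaar_sphere_of_ne_zero μ x hr))).symm

section Translation

variable {G : Type*} [AddCommGroup G] [MeasurableSpace G] {μ : Measure G}

theorem setLIntegral_setLIntegral_sub [MeasurableAdd₂ G] [MeasurableNeg G] [SFinite μ]
    [μ.IsAddLeftInvariant] [μ.IsNegInvariant] {g : G → ℝ≥0∞} (hg : Measurable g) (S : Set G)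
    {T : Set G} (hT : MeasurableSet T) :
    ∫⁻ x in S, ∫⁻ y in T, g (x - y) ∂μ ∂μ = ∫⁻ u, g u * μ (S ∩ (· - u) ⁻¹' T) ∂μ := by
  calc ∫⁻ x in S, ∫⁻ y in T, g (x - y) ∂μ ∂μ
      = ∫⁻ x in S, ∫⁻ u, T.indicator 1 (x - u) * g u ∂μ ∂μ := by
        refine lintegral_congr fun x => ?_
        rw [← lintegral_indicator hT, ← lintegral_sub_left_eq_self _ x]
        simp only [indicator, sub_sub_cancel, Pi.one_apply, ite_mul, one_mul, zero_mul]
    _ = ∫⁻ u, ∫⁻ x in S, T.indicator 1 (x - u) * g u ∂μ ∂μ :=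
        lintegral_lintegral_swap ((((measurable_one.indicator hT).comp measurable_sub).mul
          (hg.comp measurable_snd)).aemeasurable)
    _ = ∫⁻ u, g u * μ (S ∩ (· - u) ⁻¹' T) ∂μ := by
        refine lintegral_congr fun u => ?_
        have hTu : MeasurableSet ((· - u) ⁻¹' T) := measurable_sub_const u hT
        have hind (x : G) : T.indicator (1 : G → ℝ≥0∞) (x - u) = ((· - u) ⁻¹' T).indicator 1 x :=
          (indicator_comp_right (· - u)).symm
        simp_rw [hind]
        rw [lintegral_mul_const _ (measurable_one.indicator hTu), lintegral_indicator_one hTu,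
          Measure.restrict_apply hTu, inter_comm, mul_comm]

theorem lowerSemicontinuous_measure_inter_preimage_sub [TopologicalSpace G]
    [IsTopologicalAddGroup G] [BorelSpace G] [μ.IsAddRightInvariant]
    [μ.InnerRegularCompactLTTop] [IsLocallyFiniteMeasure μ] (S : Set G) {T : Set G}
    (hT : NullMeasurableSet T μ) (hTfin : μ T ≠ ∞) :
    LowerSemicontinuous fun u => μ (S ∩ (· - u) ⁻¹' T) := by
  intro u₀ c hc
  let f : C(G, C(G, G)) := ContinuousMap.curry ⟨fun p : G × G => p.2 - p.1, by fun_prop⟩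
  have hsymm := tendsto_measure_symmDiff_preimage_nhds_zero (f.continuous.tendsto u₀)
    (.of_forall fun u => measurePreserving_sub_right μ u) (measurePreserving_sub_right μ u₀)
    hT hTfin
  filter_upwards [hsymm.eventually (gt_mem_nhds (tsub_pos_of_lt hc))] with u hu
  refine (lt_tsub_comm.1 hu).trans_le (tsub_le_iff_right.2 ?_)
  calc μ (S ∩ (· - u₀) ⁻¹' T)
      ≤ μ (S ∩ (· - u) ⁻¹' T ∪ symmDiff (f u ⁻¹' T) (f u₀ ⁻¹' T)) :=
        measure_mono fun v ⟨hvS, hvT⟩ => (em (v - u ∈ T)).elim (fun h => Or.inl ⟨hvS, h⟩)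
          fun h => Or.inr (Or.inr ⟨hvT, h⟩)
    _ ≤ _ := measure_union_le _ _

theorem exists_measure_inter_preimage_sub_pos [MeasurableAdd₂ G] [MeasurableNeg G] [SFinite μ]
    [μ.IsAddLeftInvariant] [μ.IsNegInvariant] {S T : Set G} (hT : MeasurableSet T)
    (hS : 0 < μ S) (hTpos : 0 < μ T) : ∃ u, 0 < μ (S ∩ (· - u) ⁻¹' T) := by
  by_contra! h
  have h₁ := setLIntegral_setLIntegral_sub (μ := μ) measurable_one S hT
  simp only [Pi.one_apply, one_mul, le_zero_iff.1 (h _), lintegral_zero,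
    lintegral_const, Measure.restrict_apply_univ] at h₁
  exact (ENNReal.mul_pos hTpos.ne' hS.ne').ne' h₁

end Translation

section MeasSupp

variable {d : ℕ} {B C : Set (EuclideanSpace ℝ (Fin d))}

theorem measSupp_eq_support_restrict (B : Set (EuclideanSpace ℝ (Fin d))) :
    measSupp B = (volume.restrict B).support := by
  ext x
  rw [nhds_basis_ball.mem_measureSupport, measSupp, mem_ofPred_eq]
  simp only [Measure.restrict_apply measurableSet_ball, inter_comm]

theorem measure_diff_measSupp (B : Set (EuclideanSpace ℝ (Fin d))) :
    volume (B \ measSupp B) = 0 := by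
  have h := Measure.measure_compl_support (μ := volume.restrict B)
  rwa [← measSupp_eq_support_restrict, Measure.restrict_apply
    (measSupp_eq_support_restrict B ▸ Measure.isClosed_support.measurableSet).compl,
    inter_comm] at h

theorem measSupp_union_subset : measSupp (B ∪ C) ⊆ measSupp B ∪ measSupp C := by
  simp only [measSupp_eq_support_restrict, ← Measure.support_add]
  exact Measure.support_mono (Measure.restrict_union_le B C)

theorem exists_mem_measSupp (hB : 0 < volume B) : (B ∩ measSupp B).Nonempty := by
  rw [measSupp_eq_support_restrict]
  exact Measure.nonempty_inter_support_of_pos (by rwa [Measure.restrict_apply_self])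

end MeasSupp

section Density

variable {d : ℕ} {A : Set (EuclideanSpace ℝ (Fin d))} {x : EuclideanSpace ℝ (Fin d)}

theorem mem_densityOne_iff_closedBall : x ∈ densityOne A ↔
    Tendsto (fun r => volume (A ∩ closedBall x r) / volume (closedBall x r)) (𝓝[>] 0) (𝓝 1) := by
  refine tendsto_congr' ?_
  filter_upwards [self_mem_nhdsWithin] with r (hr : 0 < r)
  rw [measure_congr (ball_ae_eq_closedBall volume x hr.ne'),
    measure_congr ((ae_eq_refl A).inter (ball_ae_eq_closedBall volume x hr.ne'))]

theorem densityOne_ae_eq (hA : MeasurableSet A) : densityOne A =ᵐ[volume] A := by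
  filter_upwards [Besicovitch.ae_tendsto_measure_inter_div_of_measurableSet volume hA] with x hx
  refine propext ⟨fun h => ?_, fun h => ?_⟩
  · by_contra hxA
    have := tendsto_nhds_unique hx (mem_densityOne_iff_closedBall.1 h)
    simp [indicator_of_notMem hxA] at this
  · exact mem_densityOne_iff_closedBall.2 (by simpa [indicator_of_mem h] using hx)

theorem measure_inter_densityOne (hA : MeasurableSet A) (s : Set (EuclideanSpace ℝ (Fin d))) :
    volume (densityOne A ∩ s) = volume (A ∩ s) :=
  measure_congr ((densityOne_ae_eq hA).inter (ae_eq_refl s))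

theorem mem_measSupp_of_mem_densityOne (hx : x ∈ densityOne A) : x ∈ measSupp A := by
  intro r hr
  obtain ⟨s, hs, hsr⟩ := ((hx.eventually_ne one_ne_zero).and
    (Ioo_mem_nhdsGT_of_mem ⟨le_rfl, hr⟩)).exists
  refine (pos_iff_ne_zero.2 fun h => hs ?_).trans_le
    (measure_mono (inter_subset_inter_right _ (ball_subset_ball hsr.2.le)))
  rw [h, ENNReal.zero_div]

end Density

section Kernel

variable {d : ℕ} {ε : ℝ} {ρ : EuclideanSpace ℝ (Fin d) → ℝ≥0∞}

theorem IsFiniteHorizonKernel.ae_eq_zero_of_le_norm (hε : 0 < ε)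
    (hρ : IsFiniteHorizonKernel ε ρ) : ∀ᵐ u : EuclideanSpace ℝ (Fin d), ε ≤ ‖u‖ → ρ u = 0 := by
  have hsub : {u | ¬ (ε ≤ ‖u‖ → ρ u = 0)} ⊆
      (Function.support ρ \ measSupp (Function.support ρ)) ∪ sphere 0 ε := by
    intro u hu
    simp only [mem_ofPred_eq, Classical.not_imp] at hu
    rcases hu.1.eq_or_lt with h | h
    · exact Or.inr (mem_sphere_zero_iff_norm.2 h.symm)
    · exact Or.inl ⟨hu.2, by rw [hρ.2, mem_closedBall_zero_iff]; exact h.not_ge⟩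
  exact measure_mono_null hsub (measure_union_null (measure_diff_measSupp _)
    (Measure.addHaar_sphere_of_ne_zero volume 0 hε.ne'))

theorem IsFiniteHorizonKernel.setLIntegral_eq_zero_of_le_dist (hε : 0 < ε)
    (hρ : IsFiniteHorizonKernel ε ρ) (x : EuclideanSpace ℝ (Fin d))
    {Q : Set (EuclideanSpace ℝ (Fin d))} (hQ : ∀ y ∈ Q, ε ≤ dist x y) :
    ∫⁻ y in Q, ρ (x - y) / edist x y = 0 := by
  have hfar : ∀ᵐ y ∂volume, ε ≤ dist x y → ρ (x - y) = 0 := by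
    simpa only [dist_eq_norm] using
      (Measure.measurePreserving_sub_left volume x).quasiMeasurePreserving.ae
        (hρ.ae_eq_zero_of_le_norm hε)
  have hM : MeasurableSet {y | ε ≤ dist x y} :=
    measurableSet_le measurable_const measurable_dist.of_uncurry_left
  refine (lintegral_congr_ae ?_).trans lintegral_zero
  filter_upwards [ae_restrict_of_ae_restrict_of_subset hQ ((ae_restrict_iff' hM).2 hfar)]
    with y hy
  rw [hy, ENNReal.zero_div]

-- The interaction is `∫ ρ u / ‖u‖ * |S ∩ (T + u)| du`. The overlap `|S ∩ (T + u)|` is lower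
-- semicontinuous in `u` and not identically zero, so it is positive on an open set of `u` with
-- `‖u‖ ≤ ε`, where `ρ` has positive mass.
theorem IsFiniteHorizonKernel.setLIntegral_setLIntegral_pos (hρ : IsFiniteHorizonKernel ε ρ)
    {S T : Set (EuclideanSpace ℝ (Fin d))} (hT : MeasurableSet T) (hS : 0 < volume S)
    (hTpos : 0 < volume T) (hTfin : volume T ≠ ⊤) (hST : ∀ x ∈ S, ∀ y ∈ T, dist x y ≤ ε) :
    0 < ∫⁻ x in S, ∫⁻ y in T, ρ (x - y) / edist x y := by
  set φ := fun u => volume (S ∩ (· - u) ⁻¹' T)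
  have hφ : LowerSemicontinuous φ :=
    lowerSemicontinuous_measure_inter_preimage_sub S hT.nullMeasurableSet hTfin
  obtain ⟨u₀, hu₀⟩ := exists_measure_inter_preimage_sub_pos hT hS hTpos
  have hu₀ε : u₀ ∈ measSupp (Function.support ρ) := by
    obtain ⟨x, hxS, hxT⟩ := nonempty_of_measure_ne_zero hu₀.ne'
    rw [hρ.2, mem_closedBall_zero_iff]
    simpa [dist_eq_norm] using hST x hxS _ hxT
  obtain ⟨σ, hσ, hball⟩ := Metric.isOpen_iff.1 (hφ.isOpen_preimage 0) u₀ hu₀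
  simp_rw [edist_eq_enorm_sub]
  have hm : Measurable fun u => ρ u / ‖u‖ₑ * φ u := (hρ.1.div measurable_enorm).mul hφ.measurable
  rw [setLIntegral_setLIntegral_sub (g := fun u => ρ u / ‖u‖ₑ) (hρ.1.div measurable_enorm) S hT]
  refine (lintegral_pos_iff_support hm).2 <|
    (hu₀ε σ hσ).trans_le (measure_mono fun u ⟨hu, huσ⟩ => ?_)
  exact mul_ne_zero (ENNReal.div_ne_zero.2 ⟨hu, enorm_ne_top⟩) (hball huσ).ne'

theorem IsFiniteHorizonKernel.setLIntegral_setLIntegral_pos_of_mem_measSupp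
    (hρ : IsFiniteHorizonKernel ε ρ) {B₁ B₂ : Set (EuclideanSpace ℝ (Fin d))}
    (hB₂ : MeasurableSet B₂) {a b : EuclideanSpace ℝ (Fin d)} (ha : a ∈ measSupp B₁)
    (hb : b ∈ measSupp B₂) (hab : dist a b < ε) :
    0 < ∫⁻ x in B₁, ∫⁻ y in B₂, ρ (x - y) / edist x y := by
  obtain ⟨r, hr, hrε⟩ : ∃ r, 0 < r ∧ dist a b + 2 * r = ε :=
    ⟨(ε - dist a b) / 2, by linarith, by ring⟩
  have hST : ∀ x ∈ B₁ ∩ ball a r, ∀ y ∈ B₂ ∩ ball b r, dist x y ≤ ε := by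
    rintro x ⟨-, hx⟩ y ⟨-, hy⟩
    linarith [dist_triangle4 x a b y, mem_ball.1 hx, mem_ball'.1 hy]
  refine (hρ.setLIntegral_setLIntegral_pos (hB₂.inter measurableSet_ball) (ha r hr) (hb r hr)
    (measure_ball_lt_top.trans_le' (measure_mono inter_subset_right)).ne hST).trans_le ?_
  exact (lintegral_mono fun x => lintegral_mono_set inter_subset_left).trans
    (lintegral_mono_set inter_subset_left)

end Kernel

section Components

variable {d : ℕ} {ε : ℝ} {A : Set (EuclideanSpace ℝ (Fin d))}
  {x y w : EuclideanSpace ℝ (Fin d)}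

theorem epsConnected_refl (hx : x ∈ densityOne A) : epsConnected ε A x x :=
  ⟨0, fun _ => x, rfl, rfl, fun _ _ => hx, fun _ h => absurd h (Nat.not_lt_zero _)⟩

theorem epsConnected.symm (h : epsConnected ε A x y) : epsConnected ε A y x := by
  obtain ⟨N, z, h0, hN, hmem, hd⟩ := h
  refine ⟨N, fun i => z (N - i), by simp [hN], by simp [h0],
    fun i _ => hmem _ (Nat.sub_le _ _), fun i hi => ?_⟩
  have h' := hd (N - (i + 1)) (by omega)
  rw [show N - (i + 1) + 1 = N - i by omega, dist_comm] at h'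
  exact h'

theorem epsConnected.trans (h₁ : epsConnected ε A x y) (h₂ : epsConnected ε A y w) :
    epsConnected ε A x w := by
  obtain ⟨N, z, hz0, hzN, hzmem, hzd⟩ := h₁
  obtain ⟨M, u, hu0, huM, humem, hud⟩ := h₂
  have hglue : z N = u 0 := hzN.trans hu0.symm
  refine ⟨N + M, fun i => if i ≤ N then z i else u (i - N), by simp [hz0], ?_, ?_, ?_⟩
  · rcases Nat.eq_zero_or_pos M with rfl | hM
    · simp [hglue, huM]
    · simp [show ¬ N + M ≤ N by omega, huM]
  · intro i hi
    dsimp only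
    split_ifs with h
    exacts [hzmem i h, humem _ (by omega)]
  · intro i hi
    dsimp only
    rcases lt_trichotomy i N with h | rfl | h
    · rw [if_pos h.le, if_pos (by omega : i + 1 ≤ N)]; exact hzd i h
    · rw [if_pos le_rfl, if_neg (by omega), hglue, Nat.add_sub_cancel_left]
      exact hud 0 (by omega)
    · rw [if_neg (by omega), if_neg (by omega), show i + 1 - N = i - N + 1 by omega]
      exact hud _ (by omega)

theorem epsComponent_subset_densityOne : epsComponent ε A x ⊆ densityOne A :=
  fun _ hy => hy.1

theorem mem_epsComponent_self (hx : x ∈ densityOne A) : x ∈ epsComponent ε A x :=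
  ⟨hx, epsConnected_refl hx⟩

theorem epsComponent_eq_of_mem (hy : y ∈ epsComponent ε A x) :
    epsComponent ε A y = epsComponent ε A x :=
  ext fun _ => and_congr_right fun _ => ⟨hy.2.trans, hy.2.symm.trans⟩

theorem mem_epsComponent_of_dist_lt (hy : y ∈ epsComponent ε A x) (hw : w ∈ densityOne A)
    (hd : dist y w < ε) : w ∈ epsComponent ε A x := by
  refine ⟨hw, hy.2.trans ⟨1, fun i => if i = 0 then y else w, rfl, rfl, ?_, ?_⟩⟩
  · intro i _
    dsimp only
    split_ifs
    exacts [hy.1, hw]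
  · intro i hi
    simpa [Nat.lt_one_iff.1 hi] using hd

theorem disjoint_epsComponent (h : epsComponent ε A x ≠ epsComponent ε A y) :
    Disjoint (epsComponent ε A x) (epsComponent ε A y) :=
  Set.disjoint_left.2 fun _ hx hy =>
    h ((epsComponent_eq_of_mem hx).symm.trans (epsComponent_eq_of_mem hy))

theorem exists_chain_of_mem_epsComponent (hy : y ∈ epsComponent ε A x)
    (hw : w ∈ epsComponent ε A x) :
    ∃ N : ℕ, ∃ z : ℕ → EuclideanSpace ℝ (Fin d), z 0 = y ∧ z N = w ∧
      (∀ i ≤ N, z i ∈ epsComponent ε A x) ∧ ∀ i < N, dist (z i) (z (i + 1)) < ε := by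
  obtain ⟨N, z, h0, hN, hmem, hd⟩ := hy.2.symm.trans hw.2
  refine ⟨N, z, h0, hN, fun i hi => ?_, hd⟩
  induction i with
  | zero => exact h0 ▸ hy
  | succ i ih => exact mem_epsComponent_of_dist_lt (ih (by omega)) (hmem _ hi) (hd i hi)

theorem epsComponent_eq_inter_thickening (hε : 0 < ε) :
    epsComponent ε A x = densityOne A ∩ thickening ε (epsComponent ε A x) := by
  refine Subset.antisymm (fun y hy => ⟨hy.1, self_subset_thickening hε _ hy⟩) ?_
  rintro w ⟨hw, hwF⟩
  rw [thickening_eq_biUnion_ball, mem_iUnion₂] at hwF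
  obtain ⟨y, hy, hwy⟩ := hwF
  exact mem_epsComponent_of_dist_lt hy hw (by rwa [dist_comm, ← mem_ball])

theorem nullMeasurableSet_epsComponent (hε : 0 < ε) (hA : MeasurableSet A) :
    NullMeasurableSet (epsComponent ε A x) volume := by
  rw [epsComponent_eq_inter_thickening hε]
  exact (hA.nullMeasurableSet.congr (densityOne_ae_eq hA).symm).inter
    isOpen_thickening.measurableSet.nullMeasurableSet

theorem mem_measSupp_epsComponent (hε : 0 < ε) (hA : MeasurableSet A)
    (hy : y ∈ epsComponent ε A x) : y ∈ measSupp (epsComponent ε A x) := by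
  intro r hr
  have hsub : densityOne A ∩ ball y (min r ε) ⊆ epsComponent ε A x ∩ ball y r :=
    fun w ⟨hw, hwy⟩ => ⟨mem_epsComponent_of_dist_lt hy hw
      (by rw [dist_comm]; exact (mem_ball.1 hwy).trans_le (min_le_right r ε)),
      ball_subset_ball (min_le_left r ε) hwy⟩
  calc 0 < volume (A ∩ ball y (min r ε)) :=
        mem_measSupp_of_mem_densityOne hy.1 _ (lt_min hr hε)
    _ = volume (densityOne A ∩ ball y (min r ε)) := (measure_inter_densityOne hA _).symm
    _ ≤ volume (epsComponent ε A x ∩ ball y r) := measure_mono hsub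

theorem measure_epsComponent_pos (hε : 0 < ε) (hA : MeasurableSet A) (hx : x ∈ densityOne A) :
    0 < volume (epsComponent ε A x) :=
  (mem_measSupp_epsComponent hε hA (mem_epsComponent_self hx) 1 one_pos).trans_le
    (measure_mono inter_subset_left)

def epsComponents (ε : ℝ) (A : Set (EuclideanSpace ℝ (Fin d))) :
    Set (Set (EuclideanSpace ℝ (Fin d))) :=
  epsComponent ε A '' densityOne A

theorem sUnion_epsComponents : ⋃₀ epsComponents ε A = densityOne A := by
  refine Subset.antisymm (sUnion_subset ?_) fun x hx =>
    ⟨_, mem_image_of_mem _ hx, mem_epsComponent_self hx⟩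
  rintro _ ⟨x, -, rfl⟩
  exact epsComponent_subset_densityOne

theorem pairwiseDisjoint_epsComponents : (epsComponents ε A).PairwiseDisjoint id := by
  rintro _ ⟨x, -, rfl⟩ _ ⟨y, -, rfl⟩ h
  exact disjoint_epsComponent h

theorem countable_epsComponents (hε : 0 < ε) (hA : MeasurableSet A) :
    (epsComponents ε A).Countable :=
  pairwiseDisjoint_epsComponents.countable_of_measure_pos
    (by rintro _ ⟨x, -, rfl⟩; exact nullMeasurableSet_epsComponent hε hA)
    (by rintro _ ⟨x, hx, rfl⟩; exact measure_epsComponent_pos hε hA hx)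

end Components

section Perimeter

variable {d : ℕ} {ε : ℝ} {ρ : EuclideanSpace ℝ (Fin d) → ℝ≥0∞} {A : Set (EuclideanSpace ℝ (Fin d))}

theorem gagPer_congr_ae {s t : Set (EuclideanSpace ℝ (Fin d))} (h : s =ᵐ[volume] t) :
    gagPer ρ s = gagPer ρ t := by
  rw [gagPer, gagPer, Measure.restrict_congr_set h, Measure.restrict_congr_set h.compl]

theorem gagPer_epsComponent (hε : 0 < ε) (hρ : IsFiniteHorizonKernel ε ρ) (hA : MeasurableSet A)
    (x : EuclideanSpace ℝ (Fin d)) :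
    gagPer ρ (epsComponent ε A x) =
      2 * ∫⁻ w in epsComponent ε A x, ∫⁻ y in (densityOne A)ᶜ, ρ (w - y) / edist w y := by
  set F := epsComponent ε A x
  refine congrArg (2 * ·) (lintegral_congr_ae ?_)
  filter_upwards [ae_restrict_mem₀ (nullMeasurableSet_epsComponent hε hA)] with w hw
  have hfar : ∫⁻ y in densityOne A \ F, ρ (w - y) / edist w y = 0 :=
    hρ.setLIntegral_eq_zero_of_le_dist hε w fun y ⟨hy, hyF⟩ =>
      not_lt.1 fun h => hyF (mem_epsComponent_of_dist_lt hw hy h)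
  refine le_antisymm ?_ (lintegral_mono_set (compl_subset_compl.2 epsComponent_subset_densityOne))
  calc ∫⁻ y in Fᶜ, ρ (w - y) / edist w y
      ≤ ∫⁻ y in (densityOne A)ᶜ ∪ (densityOne A \ F), ρ (w - y) / edist w y :=
        lintegral_mono_set fun y hy => (em (y ∈ densityOne A)).elim (fun h => Or.inr ⟨h, hy⟩) Or.inl
    _ ≤ _ := (lintegral_union_le _ _ _).trans_eq (by rw [hfar, add_zero])

theorem gagPer_eq_tsum_epsComponents (hε : 0 < ε) (hρ : IsFiniteHorizonKernel ε ρ)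
    (hA : MeasurableSet A) :
    gagPer ρ A = ∑' F : epsComponents ε A, gagPer ρ (F : Set (EuclideanSpace ℝ (Fin d))) := by
  have := (countable_epsComponents hε hA).to_subtype
  have hnull : ∀ F : epsComponents ε A, NullMeasurableSet (F : Set (EuclideanSpace ℝ (Fin d))) := by
    rintro ⟨_, x, -, rfl⟩; exact nullMeasurableSet_epsComponent hε hA
  have hdisj : Pairwise (Function.onFun (AEDisjoint volume) fun F : epsComponents ε A =>
      (F : Set (EuclideanSpace ℝ (Fin d)))) := fun F G h =>
    (pairwiseDisjoint_epsComponents F.2 G.2 (Subtype.coe_ne_coe.2 h)).aedisjoint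
  have hcover : ⋃ F : epsComponents ε A, (F : Set (EuclideanSpace ℝ (Fin d))) = densityOne A :=
    sUnion_eq_iUnion.symm.trans sUnion_epsComponents
  rw [gagPer_congr_ae (densityOne_ae_eq hA).symm, gagPer]
  nth_rw 1 [← hcover]
  rw [lintegral_iUnion₀ hnull hdisj, ← ENNReal.tsum_mul_left]
  refine tsum_congr ?_
  rintro ⟨_, x, -, rfl⟩
  exact (gagPer_epsComponent hε hρ hA x).symm

theorem gagPer_union (hρ : Measurable ρ) {E₁ E₂ : Set (EuclideanSpace ℝ (Fin d))}
    (h₁ : MeasurableSet E₁) (h₂ : MeasurableSet E₂) (hd : Disjoint E₁ E₂) :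
    gagPer ρ E₁ + gagPer ρ E₂ = gagPer ρ (E₁ ∪ E₂) +
      2 * ((∫⁻ x in E₁, ∫⁻ y in E₂, ρ (x - y) / edist x y) +
        ∫⁻ x in E₂, ∫⁻ y in E₁, ρ (x - y) / edist x y) := by
  have hk : Measurable fun p : EuclideanSpace ℝ (Fin d) × EuclideanSpace ℝ (Fin d) =>
      ρ (p.1 - p.2) / edist p.1 p.2 := (hρ.comp measurable_sub).div measurable_edist
  have hsplit : ∀ {E E' : Set (EuclideanSpace ℝ (Fin d))}, MeasurableSet E' → Disjoint E E' →
      ∫⁻ x in E, ∫⁻ y in Eᶜ, ρ (x - y) / edist x y =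
        (∫⁻ x in E, ∫⁻ y in (E ∪ E')ᶜ, ρ (x - y) / edist x y) +
          ∫⁻ x in E, ∫⁻ y in E', ρ (x - y) / edist x y := by
    intro E E' hE' hdE
    have hc : Eᶜ = (E ∪ E')ᶜ ∪ E' := by
      rw [compl_union, inter_union_distrib_right, compl_union_self, inter_univ,
        union_eq_left.2 (hdE.symm.subset_compl_right)]
    simp_rw [hc, Measure.restrict_union (disjoint_compl_left.mono_right subset_union_right) hE',
      lintegral_add_measure]
    exact lintegral_add_right _ (hk.lintegral_prod_right')
  simp only [gagPer]
  rw [hsplit h₂ hd, hsplit h₁ hd.symm, union_comm E₂, Measure.restrict_union hd h₂,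
    lintegral_add_measure]
  ring

theorem not_epsDecomposable_epsComponent (hε : 0 < ε) (hρ : IsFiniteHorizonKernel ε ρ)
    (hA : MeasurableSet A) (x : EuclideanSpace ℝ (Fin d)) :
    ¬ epsDecomposable ρ (epsComponent ε A x) := by
  rintro ⟨E₁, E₂, h₁, h₂, hunion, hdisj, hpos₁, hpos₂, hfin₁, hfin₂, hsum⟩
  have hcross : ∫⁻ u in E₁, ∫⁻ v in E₂, ρ (u - v) / edist u v = 0 := by
    have h := gagPer_union hρ.1 h₁ h₂ hdisj
    rw [← hsum, hunion] at h
    have hfin : gagPer ρ (epsComponent ε A x) ≠ ⊤ := hsum ▸ (ENNReal.add_lt_top.2 ⟨hfin₁, hfin₂⟩).ne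
    have h0 := (ENNReal.add_right_inj hfin).1 (h.symm.trans (add_zero _).symm)
    exact (add_eq_zero.1 ((mul_eq_zero.1 h0).resolve_left two_ne_zero)).1
  obtain ⟨y₁, hy₁, hy₁'⟩ := exists_mem_measSupp hpos₁
  obtain ⟨y₂, hy₂, hy₂'⟩ := exists_mem_measSupp hpos₂
  obtain ⟨N, z, hz₀, hzN, hzF, hzd⟩ := exists_chain_of_mem_epsComponent
    (hunion ▸ Or.inl hy₁ : y₁ ∈ epsComponent ε A x)
    (hunion ▸ Or.inr hy₂ : y₂ ∈ epsComponent ε A x)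
  have hzE : ∀ i ≤ N, z i ∈ measSupp E₁ ∪ measSupp E₂ := fun i hi =>
    measSupp_union_subset (hunion ▸ mem_measSupp_epsComponent hε hA (hzF i hi))
  obtain ⟨p, hp, q, hq, hpq⟩ := exists_dist_lt_of_chain hε (hz₀ ▸ hy₁') (hzN ▸ hy₂') hzE hzd
  exact (hρ.setLIntegral_setLIntegral_pos_of_mem_measSupp h₂ hp hq hpq).ne' hcross

end Perimeter

theorem eq_epsComponents {d : ℕ} {ε : ℝ} {A : Set (EuclideanSpace ℝ (Fin d))}
    {S : Set (Set (EuclideanSpace ℝ (Fin d)))}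
    (hS : ∀ F ∈ S, ∃ x ∈ densityOne A, F = epsComponent ε A x) (hcover : ⋃₀ S = densityOne A) :
    S = epsComponents ε A := by
  ext F
  refine ⟨fun hF => ?_, ?_⟩
  · obtain ⟨x, hx, rfl⟩ := hS F hF
    exact mem_image_of_mem _ hx
  · rintro ⟨x, hx, rfl⟩
    obtain ⟨F', hF', hxF'⟩ := (hcover ▸ hx : x ∈ ⋃₀ S)
    obtain ⟨x', -, rfl⟩ := hS F' hF'
    rwa [epsComponent_eq_of_mem hxF']

theorem statement4_general (d : ℕ) (ε : ℝ) (hε : 0 < ε)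
    (ρ : EuclideanSpace ℝ (Fin d) → ℝ≥0∞) (hρ : IsFiniteHorizonKernel ε ρ)
    (A : Set (EuclideanSpace ℝ (Fin d))) (hA : MeasurableSet A) :
    ∃! S : Set (Set (EuclideanSpace ℝ (Fin d))),
      S.Countable ∧
      (∀ F ∈ S, ∃ x ∈ densityOne A, F = epsComponent ε A x) ∧
      (∀ F ∈ S, ¬ epsDecomposable ρ F ∧ 0 < volume F) ∧
      S.PairwiseDisjoint id ∧
      ⋃₀ S = densityOne A ∧
      gagPer ρ A = ∑' F : S, gagPer ρ (F : Set (EuclideanSpace ℝ (Fin d))) := by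
  refine ⟨epsComponents ε A, ⟨countable_epsComponents hε hA, ?_, ?_,
    pairwiseDisjoint_epsComponents, sUnion_epsComponents, gagPer_eq_tsum_epsComponents hε hρ hA⟩,
    fun S ⟨_, hS, _, _, hcover, _⟩ => eq_epsComponents hS hcover⟩
  · rintro _ ⟨x, hx, rfl⟩
    exact ⟨x, hx, rfl⟩
  · rintro _ ⟨x, hx, rfl⟩
    exact ⟨not_epsDecomposable_epsComponent hε hρ hA x, measure_epsComponent_pos hε hA hx⟩

/-- ε-decomposition theorem: a set of finite `𝔓_ε`-perimeter has a unique at most countable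
decomposition into its `ε`-connected components, which are `ε`-indecomposable, have positive
measure, are pairwise disjoint, cover `E^(1)`, and whose perimeters sum to `𝔓_ε(E)`. -/
theorem statement4 (d : ℕ) (ε : ℝ) (hε : 0 < ε)
    (ρ : EuclideanSpace ℝ (Fin d) → ℝ≥0∞) (hρ : IsFiniteHorizonKernel ε ρ)
    (A : Set (EuclideanSpace ℝ (Fin d))) (hA : MeasurableSet A)
    (hfin : gagPer ρ A < ⊤) :
    ∃! S : Set (Set (EuclideanSpace ℝ (Fin d))),
      S.Countable ∧
      (∀ F ∈ S, ∃ x ∈ densityOne A, F = epsComponent ε A x) ∧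
      (∀ F ∈ S, ¬ epsDecomposable ρ F ∧ 0 < volume F) ∧
      S.PairwiseDisjoint id ∧
      ⋃₀ S = densityOne A ∧
      gagPer ρ A = ∑' F : S, gagPer ρ (F : Set (EuclideanSpace ℝ (Fin d))) :=
  statement4_general d ε hε ρ hρ A hA

end
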